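/- Fix α ∈ (1/2, 1) and C ∈ ℝ, and for n ≥ 2 set R_n = 2 ln n + C. Then there exist a constant c₁ > 0 and N such that for all n ≥ N and all r with R_n/2 ≤ r ≤ R_n, n · I(r, R_n) ≤ c₁ · √n. (In the hyperbolic random graph model, the expected degree of a vertex with radial coordinate r ≥ R_n/2 is at most c₁ √n.) -/

import Mathlib

/-!
Since `cosh r cosh s - sinh r sinh s cos φ = cosh (r - s) + 2 sinh r sinh s sin² (φ / 2)`, a
point at radius `s` can only be adjacent to `(r, 0)` if `sin² (φ / 2) ≤ cosh R / (2 sinh r sinh s)`,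
and by Jordan's inequality these angles have measure at most `2π √(cosh R / (2 sinh r sinh s))`.
Integrating this bound against the radial density (after exchanging the order of integration)
and using `sinh (α s) ≤ e^{(α - 1/2) s} √(sinh s)` gives
`I(r, R) ≤ α / (cosh (α R) - 1) · √(cosh R / (2 sinh r)) · e^{(α - 1/2) R} / (α - 1/2)`,
which is `O(e^{-R/4})` for `r ≥ R / 2`; finally `n e^{-R_n/4} = e^{-C/4} √n`.
-/

/-- `hrgI α r R` is the probability measure `μ(B_r(R) ∩ B_0(R))` in the hyperbolic
random graph model: the probability that a vertex sampled in the disk of radius `R`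
(with radial density `α sinh(α s)/(cosh(α R) - 1)` and uniform angle) lies within
hyperbolic distance `R` of the point with polar coordinates `(r, 0)`. -/
noncomputable def hrgI (α r R : ℝ) : ℝ :=
  (1 / (2 * Real.pi)) * ∫ φ in (0 : ℝ)..(2 * Real.pi), ∫ s in (0 : ℝ)..R,
    if Real.cosh r * Real.cosh s - Real.sinh r * Real.sinh s * Real.cos φ ≤ Real.cosh R
    then α * Real.sinh (α * s) / (Real.cosh (α * R) - 1) else 0

open Real MeasureTheory Set

theorem cosh_mul_cosh_sub_sinh_mul_sinh_mul_cos (r s φ : ℝ) :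
    cosh r * cosh s - sinh r * sinh s * cos φ
      = cosh (r - s) + 2 * sinh r * sinh s * sin (φ / 2) ^ 2 := by
  have h := cos_two_mul_eq_one_sub (φ / 2)
  rw [mul_div_cancel₀ φ two_ne_zero] at h
  rw [cosh_sub, h]
  ring

theorem sin_half_sq_le_of_cosh_le {r s R φ : ℝ} (hr : 0 < r) (hs : 0 < s)
    (h : cosh r * cosh s - sinh r * sinh s * cos φ ≤ cosh R) :
    sin (φ / 2) ^ 2 ≤ cosh R / (2 * sinh r * sinh s) := by
  have := sinh_pos_iff.2 hr
  have := sinh_pos_iff.2 hs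
  rw [cosh_mul_cosh_sub_sinh_mul_sinh_mul_cos] at h
  rw [le_div_iff₀ (by positivity)]
  linarith [cosh_pos (r - s)]

theorem min_le_pi_mul_sin_half {φ : ℝ} (h0 : 0 ≤ φ) (h2π : φ ≤ 2 * π) :
    min φ (2 * π - φ) ≤ π * sin (φ / 2) := by
  rcases le_total φ π with h | h
  · have := mul_le_sin (x := φ / 2) (by linarith) (by linarith)
    calc min φ (2 * π - φ) ≤ φ := min_le_left _ _
      _ = π * (2 / π * (φ / 2)) := by field_simp
      _ ≤ π * sin (φ / 2) := by gcongr
  · have := mul_le_sin (x := π - φ / 2) (by linarith) (by linarith)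
    rw [sin_pi_sub] at this
    calc min φ (2 * π - φ) ≤ 2 * π - φ := min_le_right _ _
      _ = π * (2 / π * (π - φ / 2)) := by field_simp
      _ ≤ π * sin (φ / 2) := by gcongr

theorem volume_real_sin_half_sq_le (X : ℝ) :
    volume.real {φ ∈ Icc 0 (2 * π) | sin (φ / 2) ^ 2 ≤ X} ≤ 2 * π * √X := by
  set b := π * √X
  have hb : 0 ≤ b := by positivity
  have hsub : {φ ∈ Icc 0 (2 * π) | sin (φ / 2) ^ 2 ≤ X} ⊆ Icc 0 b ∪ Icc (2 * π - b) (2 * π) := by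
    rintro φ ⟨⟨h0, h2π⟩, hX⟩
    have hmin : min φ (2 * π - φ) ≤ b :=
      (min_le_pi_mul_sin_half h0 h2π).trans
        (mul_le_mul_of_nonneg_left ((le_abs_self _).trans (abs_le_sqrt hX)) pi_pos.le)
    rcases min_le_iff.1 hmin with h | h
    · exact Or.inl ⟨h0, h⟩
    · exact Or.inr ⟨by linarith, h2π⟩
  calc volume.real {φ ∈ Icc 0 (2 * π) | sin (φ / 2) ^ 2 ≤ X}
      ≤ volume.real (Icc 0 b ∪ Icc (2 * π - b) (2 * π)) :=
        measureReal_mono hsub (measure_union_lt_top measure_Icc_lt_top measure_Icc_lt_top).ne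
    _ ≤ volume.real (Icc 0 b) + volume.real (Icc (2 * π - b) (2 * π)) := measureReal_union_le _ _
    _ = 2 * π * √X := by
      rw [volume_real_Icc_of_le hb, volume_real_Icc_of_le (by linarith)]
      ring

theorem integral_angle_ite_le {r s R c : ℝ} (hr : 0 < r) (hs : 0 < s) (hc : 0 ≤ c) :
    ∫ φ in (0)..(2 * π), (if cosh r * cosh s - sinh r * sinh s * cos φ ≤ cosh R then c else 0)
      ≤ c * (2 * π * √(cosh R / (2 * sinh r * sinh s))) := by
  set S := {φ : ℝ | cosh r * cosh s - sinh r * sinh s * cos φ ≤ cosh R}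
  have hS : MeasurableSet S := measurableSet_le (by fun_prop) measurable_const
  have hsub : S ∩ Ioc 0 (2 * π) ⊆
      {φ ∈ Icc 0 (2 * π) | sin (φ / 2) ^ 2 ≤ cosh R / (2 * sinh r * sinh s)} :=
    fun φ ⟨hφ, h0, h2π⟩ => ⟨⟨h0.le, h2π⟩, sin_half_sq_le_of_cosh_le hr hs hφ⟩
  calc ∫ φ in (0)..(2 * π), (if cosh r * cosh s - sinh r * sinh s * cos φ ≤ cosh R then c else 0)
      = volume.real (S ∩ Ioc 0 (2 * π)) * c := by
        have h := integral_indicator_const c hS (μ := volume.restrict (Ioc 0 (2 * π)))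
        rw [measureReal_restrict_apply hS, smul_eq_mul] at h
        rw [intervalIntegral.integral_of_le two_pi_pos.le, ← h]
        congr 1 with φ
    _ ≤ _ := by
      rw [mul_comm]
      gcongr
      have hfin :
          volume {φ ∈ Icc 0 (2 * π) | sin (φ / 2) ^ 2 ≤ cosh R / (2 * sinh r * sinh s)} ≠ ⊤ :=
        ((measure_mono (sep_subset _ _)).trans_lt measure_Icc_lt_top).ne
      exact (measureReal_mono hsub hfin).trans (volume_real_sin_half_sq_le _)

theorem sinh_mul_le_exp_mul_sqrt_sinh {α s : ℝ} (hα0 : 0 ≤ α) (hα1 : α ≤ 1) (hs : 0 ≤ s) :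
    sinh (α * s) ≤ exp ((α - 1 / 2) * s) * √(sinh s) := by
  rw [← sqrt_sq (exp_pos _).le, ← sqrt_mul (sq_nonneg _)]
  apply le_sqrt_of_sq_le
  have hA : 1 ≤ exp (α * s) := one_le_exp (by positivity)
  have hB : exp (-(α * s)) ≤ 1 := exp_le_one_iff.2 (by linarith [mul_nonneg hα0 hs])
  have hB0 : 0 < exp (-(α * s)) := exp_pos _
  have hAB : exp (α * s) * exp (-(α * s)) = 1 := by rw [← exp_add]; simp
  have hEF : exp s * exp (-s) = 1 := by rw [← exp_add]; simp
  have hAF : exp (α * s) * exp (-s) ≤ 1 := by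
    rw [← exp_add]; exact exp_le_one_iff.2 (by nlinarith)
  have hAF0 : 0 < exp (α * s) * exp (-s) := by positivity
  have hsq : exp ((α - 1 / 2) * s) ^ 2 = exp (α * s) ^ 2 * exp (-s) := by
    rw [← exp_nat_mul, ← exp_nat_mul, ← exp_add]; ring_nf
  rw [hsq, sinh_eq, sinh_eq]
  -- after clearing the products `e^{αs} e^{-αs}` and `e^s e^{-s}`, the claim reads
  -- `e^{-2αs} + 2 (e^{αs} e^{-s})² ≤ e^{2αs} + 2`
  nlinarith [mul_le_one₀ hB hB0.le hB, mul_le_one₀ hAF hAF0.le hAF,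
    one_le_mul_of_one_le_of_one_le hA hA]

theorem integral_exp_mul_le {k : ℝ} (hk : 0 < k) (R : ℝ) :
    ∫ s in (0)..R, exp (k * s) ≤ exp (k * R) / k := by
  rw [intervalIntegral.integral_comp_mul_left exp hk.ne', integral_exp, mul_zero, exp_zero,
    smul_eq_mul, inv_mul_eq_div]
  gcongr
  linarith

theorem exp_div_four_le_cosh_sub_one {x : ℝ} (hx : 2 ≤ x) : exp x / 4 ≤ cosh x - 1 := by
  have h2 : 2 ≤ exp (x / 2) := by linarith [add_one_le_exp (x / 2)]
  have h4 : 4 ≤ exp x := by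
    have : exp x = exp (x / 2) * exp (x / 2) := by rw [← exp_add, add_halves]
    nlinarith
  rw [cosh_eq]
  linarith [exp_pos (-x)]

theorem sqrt_cosh_div_two_sinh_le {r R : ℝ} (hR : 2 ≤ R) (hr : R / 2 ≤ r) :
    √(cosh R / (2 * sinh r)) ≤ 2 * exp (R / 4) := by
  have hcosh : cosh R ≤ exp R := by
    rw [cosh_eq]; linarith [exp_le_exp.2 (by linarith : -R ≤ R)]
  have hsinh : exp r / 2 ≤ 2 * sinh r := by
    have h3 : 2 ≤ exp r * exp r := by rw [← exp_add]; linarith [add_one_le_exp (r + r)]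
    have := exp_pos r
    rw [sinh_eq, exp_neg]
    field_simp
    nlinarith
  rw [sqrt_le_iff]
  refine ⟨by positivity, ?_⟩
  calc cosh R / (2 * sinh r) ≤ exp R / (exp r / 2) := by gcongr
    _ = 2 * exp (R - r) := by rw [exp_sub]; field_simp
    _ ≤ 4 * exp (R / 2) := by
      linarith [exp_le_exp.2 (by linarith : R - r ≤ R / 2), exp_pos (R / 2)]
    _ = (2 * exp (R / 4)) ^ 2 := by rw [mul_pow, ← exp_nat_mul]; ring_nf

theorem hrgI_eq_integral_integral (α r R : ℝ) :
    hrgI α r R = 1 / (2 * π) * ∫ s in (0)..R, ∫ φ in (0)..(2 * π),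
      if cosh r * cosh s - sinh r * sinh s * cos φ ≤ cosh R
      then α * sinh (α * s) / (cosh (α * R) - 1) else 0 := by
  rw [hrgI, intervalIntegral_intervalIntegral_swap]
  obtain ⟨M, hM⟩ := (isCompact_uIcc (a := 0) (b := R)).exists_bound_of_continuousOn
    (f := fun s => α * sinh (α * s) / (cosh (α * R) - 1)) (by fun_prop)
  refine Measure.integrableOn_of_bounded (M := M) ?_ ?_ ?_
  · rw [Measure.volume_eq_prod, Measure.prod_prod]
    simp [uIoc, Real.volume_Ioc, ENNReal.mul_eq_top]
  · exact (Measurable.ite (measurableSet_le (by fun_prop) measurable_const) (by fun_prop)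
      measurable_const).aestronglyMeasurable
  · refine (ae_restrict_iff' (measurableSet_uIoc.prod measurableSet_uIoc)).2
      (ae_of_all _ fun p hp => ?_)
    have hM0 : 0 ≤ M := (norm_nonneg _).trans (hM 0 left_mem_uIcc)
    dsimp only [Function.uncurry]
    split_ifs
    · exact hM p.2 (uIoc_subset_uIcc hp.2)
    · simpa using hM0

theorem hrgI_le {α r R : ℝ} (hα : 1 / 2 < α) (hα1 : α ≤ 1) (hr : 0 < r) (hR : 0 ≤ R) :
    hrgI α r R ≤ α / (cosh (α * R) - 1) * √(cosh R / (2 * sinh r))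
      * (exp ((α - 1 / 2) * R) / (α - 1 / 2)) := by
  set A := α / (cosh (α * R) - 1) * √(cosh R / (2 * sinh r))
  have hD : 0 ≤ cosh (α * R) - 1 := sub_nonneg.2 (one_le_cosh _)
  have hρ : ∀ s, 0 ≤ s → 0 ≤ α * sinh (α * s) / (cosh (α * R) - 1) := fun s hs =>
    div_nonneg (mul_nonneg (by linarith) (sinh_nonneg_iff.2 (by nlinarith))) hD
  have hinner : ∀ s ∈ Ioc 0 R, ∫ φ in (0)..(2 * π),
      (if cosh r * cosh s - sinh r * sinh s * cos φ ≤ cosh R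
        then α * sinh (α * s) / (cosh (α * R) - 1) else 0)
      ≤ 2 * π * A * exp ((α - 1 / 2) * s) := by
    rintro s ⟨hs, -⟩
    have hsqrt : 0 < √(sinh s) := sqrt_pos.2 (sinh_pos_iff.2 hs)
    calc _ ≤ α * sinh (α * s) / (cosh (α * R) - 1)
            * (2 * π * √(cosh R / (2 * sinh r * sinh s))) :=
          integral_angle_ite_le hr hs (hρ s hs.le)
      _ = 2 * π * A * (sinh (α * s) / √(sinh s)) := by
          rw [← div_div, sqrt_div' _ (sinh_pos_iff.2 hs).le]
          ring
      _ ≤ 2 * π * A * exp ((α - 1 / 2) * s) := by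
          gcongr
          exact (div_le_iff₀ hsqrt).2 (sinh_mul_le_exp_mul_sqrt_sinh (by linarith) hα1 hs.le)
  have hnonneg : ∀ s ∈ Ioc 0 R, 0 ≤ ∫ φ in (0)..(2 * π),
      (if cosh r * cosh s - sinh r * sinh s * cos φ ≤ cosh R
        then α * sinh (α * s) / (cosh (α * R) - 1) else 0) := by
    rintro s ⟨hs, -⟩
    refine intervalIntegral.integral_nonneg two_pi_pos.le fun φ _ => ?_
    split_ifs
    exacts [hρ s hs.le, le_rfl]
  rw [hrgI_eq_integral_integral]
  calc _ ≤ 1 / (2 * π) * ∫ s in (0)..R, 2 * π * A * exp ((α - 1 / 2) * s) := by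
        gcongr
        rw [intervalIntegral.integral_of_le hR, intervalIntegral.integral_of_le hR]
        exact setIntegral_mono_of_nonneg hnonneg hinner
          (by fun_prop : Continuous _).integrableOn_Ioc
    _ = A * ∫ s in (0)..R, exp ((α - 1 / 2) * s) := by
        rw [intervalIntegral.integral_const_mul]
        field_simp
    _ ≤ A * (exp ((α - 1 / 2) * R) / (α - 1 / 2)) := by
        gcongr
        exact integral_exp_mul_le (by linarith) R

theorem hrgI_le_exp {α r R : ℝ} (hα : 1 / 2 < α) (hα1 : α ≤ 1) (hR : 4 ≤ R) (hr : R / 2 ≤ r) :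
    hrgI α r R ≤ 8 * α / (α - 1 / 2) * exp (-(R / 4)) := by
  have hk : 0 < α - 1 / 2 := by linarith
  have hD : exp (α * R) / 4 ≤ cosh (α * R) - 1 := exp_div_four_le_cosh_sub_one (by nlinarith)
  calc hrgI α r R ≤ α / (cosh (α * R) - 1) * √(cosh R / (2 * sinh r))
        * (exp ((α - 1 / 2) * R) / (α - 1 / 2)) := hrgI_le hα hα1 (by linarith) (by linarith)
    _ ≤ α / (exp (α * R) / 4) * (2 * exp (R / 4)) * (exp ((α - 1 / 2) * R) / (α - 1 / 2)) := by
        gcongr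
        exact sqrt_cosh_div_two_sinh_le (by linarith) hr
    _ = 8 * α / (α - 1 / 2) * exp (-(R / 4)) := by
        rw [show -(R / 4) = R / 4 + (α - 1 / 2) * R - α * R by ring, exp_sub, exp_add]
        field_simp
        ring

/-- In the hyperbolic random graph model with `R_n = 2 ln n + C`, the expected degree
`n · I(r, R_n)` of a vertex with radial coordinate `r ≥ R_n/2` is at most `c₁ √n`
for some constant `c₁ > 0` and all sufficiently large `n`. -/
theorem expected_degree_outer_upper_bound (α C : ℝ)
    (hα : 1 / 2 < α) (hα1 : α < 1) :
    ∃ c₁ > 0, ∃ N : ℕ, ∀ n : ℕ, N ≤ n → ∀ r : ℝ,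
      (2 * Real.log n + C) / 2 ≤ r → r ≤ 2 * Real.log n + C →
      (n : ℝ) * hrgI α r (2 * Real.log n + C) ≤ c₁ * Real.sqrt n := by
  have hk : 0 < α - 1 / 2 := by linarith
  refine ⟨8 * α / (α - 1 / 2) * exp (-(C / 4)), by positivity, ⌈exp ((4 - C) / 2)⌉₊,
    fun n hn r hr _ => ?_⟩
  have hn' : exp ((4 - C) / 2) ≤ n := (Nat.le_ceil _).trans (by exact_mod_cast hn)
  have hn0 : 0 < (n : ℝ) := (exp_pos _).trans_le hn'
  have hR : 4 ≤ 2 * log n + C := by linarith [(le_log_iff_exp_le hn0).2 hn']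
  have hsqrt : exp (-((2 * log n + C) / 4)) = exp (-(C / 4)) / √n := by
    rw [show -((2 * log n + C) / 4) = -(C / 4) - log n / 2 by ring, exp_sub, exp_half,
      exp_log hn0]
  calc (n : ℝ) * hrgI α r (2 * log n + C)
      ≤ n * (8 * α / (α - 1 / 2) * exp (-((2 * log n + C) / 4))) := by
        gcongr
        exact hrgI_le_exp hα hα1.le hR hr
    _ = 8 * α / (α - 1 / 2) * exp (-(C / 4)) * √n := by
        rw [hsqrt]
        field_simp
        rw [sq_sqrt hn0.le]
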